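/- Let t be an ordered labeled tree and let c1, c2, …, cm be all the nodes of t that are first children of their parents, listed in the order in which their closing tags appear in XML(FCNS(t)) (i.e., pos'(c̄1) < pos'(c̄2) < ⋯ < pos'(c̄m)), and let pi denote the parent of ci in t. Then the closing tags of the parents appear in the same order in XML(t): pos(p̄1) < pos(p̄2) < ⋯ < pos(p̄m). -/

import Mathlib

/-- Ordered labeled trees (rose trees). -/
inductive RTree (α : Type) : Type
  | node : α → List (RTree α) → RTree α

/-- Extended binary trees: every node has an optional left and right child. -/
inductive BTree (α : Type) : Type
  | nil : BTree α
  | node : α → BTree α → BTree α → BTree α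

namespace BTree

/-- Tag sequence of an extended binary tree: opening tag, left subtree,
right subtree, closing tag.  `false` = opening tag, `true` = closing tag. -/
def btags {α : Type} : BTree α → List (α × Bool)
  | .nil => []
  | .node a l r => (a, false) :: (btags l ++ btags r ++ [(a, true)])

end BTree

namespace RTree

variable {α : Type}

def label : RTree α → α
  | .node a _ => a

def childLabels : RTree α → List α
  | .node _ cs => cs.map label

mutual
/-- Number of nodes of a tree. -/
def size : RTree α → ℕ
  | .node _ cs => 1 + sizeL cs
def sizeL : List (RTree α) → ℕ
  | [] => 0
  | c :: cs => size c + sizeL cs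
end

mutual
/-- `XML(t)`: the tag sequence of a depth-first traversal;
`(a, false)` is an opening tag, `(a, true)` a closing tag. -/
def xml : RTree α → List (α × Bool)
  | .node a cs => (a, false) :: (xmlL cs ++ [(a, true)])
def xmlL : List (RTree α) → List (α × Bool)
  | [] => []
  | c :: cs => xml c ++ xmlL cs
end

mutual
/-- XML tag sequence where each node is identified by its path
(list of child indices from the root). -/
def ptags : RTree α → List ℕ → List (List ℕ × Bool)
  | .node _ cs, p => (p, false) :: (ptagsL cs p 0 ++ [(p, true)])
def ptagsL : List (RTree α) → List ℕ → ℕ → List (List ℕ × Bool)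
  | [], _, _ => []
  | c :: cs, p, i => ptags c (p ++ [i]) ++ ptagsL cs p (i + 1)
end

/-- `XML(t)`, with nodes identified by their paths. -/
def tagList (t : RTree α) : List (List ℕ × Bool) := ptags t []

/-- `pos(v)`: (1-indexed) position of the opening tag of node `v` in `XML(t)`. -/
def posOpen (t : RTree α) (v : List ℕ) : ℕ := (tagList t).idxOf (v, false) + 1

/-- `pos(v̄)`: (1-indexed) position of the closing tag of node `v` in `XML(t)`. -/
def posClose (t : RTree α) (v : List ℕ) : ℕ := (tagList t).idxOf (v, true) + 1

/-- Subtree of `t` rooted at the node with path `p` (if any). -/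
def subtreeAt : RTree α → List ℕ → Option (RTree α)
  | t, [] => some t
  | .node _ cs, i :: p =>
    match cs[i]? with
    | some c => subtreeAt c p
    | none => none

/-- `p` is (the path of) a node of `t`. -/
def IsNode (t : RTree α) (p : List ℕ) : Prop := (subtreeAt t p).isSome

/-- First-child next-sibling encoding of a forest. -/
def fcnsL : List (RTree α) → BTree α
  | [] => .nil
  | .node a cs :: ts => .node a (fcnsL cs) (fcnsL ts)

/-- First-child next-sibling encoding `FCNS(t)`. -/
def fcns (t : RTree α) : BTree α := fcnsL [t]

/-- FCNS encoding of a forest, nodes identified by their paths in the original tree;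
`p` is the path of the parent, `i` the index of the first tree of the forest. -/
def pfcnsL : List (RTree α) → List ℕ → ℕ → BTree (List ℕ)
  | [], _, _ => .nil
  | .node _ cs :: ts, p, i =>
      .node (p ++ [i]) (pfcnsL cs (p ++ [i]) 0) (pfcnsL ts p (i + 1))

/-- `FCNS(t)`, with nodes identified by their paths in `t`. -/
def pfcns : RTree α → BTree (List ℕ)
  | .node _ cs => .node [] (pfcnsL cs [] 0) .nil

/-- `XML(FCNS(t))`, with nodes identified by their paths in `t`. -/
def btagList (t : RTree α) : List (List ℕ × Bool) := (pfcns t).btags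

/-- `pos'(v)`: position of the opening tag of `v` in `XML(FCNS(t))`. -/
def posOpen' (t : RTree α) (v : List ℕ) : ℕ := (btagList t).idxOf (v, false) + 1

/-- `pos'(v̄)`: position of the closing tag of `v` in `XML(FCNS(t))`. -/
def posClose' (t : RTree α) (v : List ℕ) : ℕ := (btagList t).idxOf (v, true) + 1

/-- A tree is valid against a DTD `D` if for every node, the word of labels of
its children belongs to `D` applied to the node's label. -/
def Valid (D : α → List α → Prop) (t : RTree α) : Prop :=
  ∀ p st, subtreeAt t p = some st → D st.label st.childLabels

end RTree

/-- `w` is a later sibling of `v` (as paths): same parent, larger last index. -/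
def LaterSib (w v : List ℕ) : Prop := ∃ q i j, v = q ++ [i] ∧ w = q ++ [j] ∧ i < j

/-!
A node `q` with children closes in `XML(t)` right after the tags of all its proper
descendants. In `FCNS(t)` the binary subtree of its first child `q ++ [0]` consists of exactly
these descendants, so `q ++ [0]` closes in `XML(FCNS(t))` right after them as well. Hence the
postorder list of the nodes with children embeds into `XML(t)` via `q ↦ q̄` and into
`XML(FCNS(t))` via `q ↦ (q ++ [0])‾`; both tag sequences are duplicate-free (one is a
permutation of the other), so both embeddings preserve and reflect the order.
-/

open scoped List

namespace List

variable {β γ : Type*}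

theorem idxOf_lt_idxOf_of_pair_sublist [BEq β] [LawfulBEq β] {l : List β} {a b : β}
    (hl : l.Nodup) (h : [a, b] <+ l) : l.idxOf a < l.idxOf b := by
  obtain ⟨r₁, r₂, rfl, ha, hb⟩ := cons_sublist_iff.mp h
  have hb₁ : b ∉ r₁ := fun hb₁ => disjoint_of_nodup_append hl hb₁ (singleton_sublist.mp hb)
  rw [idxOf_append, idxOf_append, if_pos ha, if_neg hb₁]
  exact (idxOf_lt_length_of_mem ha).trans_le (Nat.le_add_left _ _)

theorem pair_sublist_or_pair_sublist {l : List β} {a b : β} (ha : a ∈ l) (hb : b ∈ l)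
    (hab : a ≠ b) : [a, b] <+ l ∨ [b, a] <+ l := by
  induction l with
  | nil => simp at ha
  | cons x l ih =>
    rcases mem_cons.mp ha with rfl | ha'
    · exact .inl (.cons_cons _ (singleton_sublist.mpr ((mem_cons.mp hb).resolve_left hab.symm)))
    rcases mem_cons.mp hb with rfl | hb'
    · exact .inr (.cons_cons _ (singleton_sublist.mpr ha'))
    exact (ih ha' hb').imp (·.cons _) (·.cons _)

theorem pair_sublist_of_map_sublist [BEq γ] [LawfulBEq γ] {f : β → γ} {l : List β}
    {L : List γ} {a b : β} (hL : L.Nodup) (hsub : l.map f <+ L) (ha : a ∈ l) (hb : b ∈ l)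
    (h : L.idxOf (f a) < L.idxOf (f b)) : [a, b] <+ l := by
  have hab : a ≠ b := by rintro rfl; exact lt_irrefl _ h
  refine (pair_sublist_or_pair_sublist ha hb hab).resolve_right fun hba => ?_
  have := idxOf_lt_idxOf_of_pair_sublist hL ((hba.map f).trans hsub)
  omega

theorem eq_of_append_singleton_prefix {p x : List β} {i j : β} (hi : p ++ [i] <+: x)
    (hj : p ++ [j] <+: x) : i = j := by
  simpa using (prefix_of_prefix_length_le hi hj (by simp)).eq_of_length (by simp)

end List

namespace RTree

variable {α : Type}

mutual
def internalNodes : RTree α → List ℕ → List (List ℕ)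
  | .node _ [], _ => []
  | .node _ (c :: cs), p => internalNodesL (c :: cs) p 0 ++ [p]
def internalNodesL : List (RTree α) → List ℕ → ℕ → List (List ℕ)
  | [], _, _ => []
  | c :: cs, p, i => internalNodes c (p ++ [i]) ++ internalNodesL cs p (i + 1)
end

mutual
theorem prefix_of_mem_ptags : ∀ {t : RTree α} {q x : List ℕ} {b : Bool},
    (x, b) ∈ ptags t q → q <+: x
  | .node _ cs, q, x, b, h => by
    simp only [ptags, List.mem_cons, List.mem_append, Prod.mk.injEq, List.not_mem_nil,
      or_false] at h
    rcases h with ⟨rfl, -⟩ | h | ⟨rfl, -⟩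
    · exact List.prefix_refl _
    · obtain ⟨j, -, hj⟩ := exists_prefix_of_mem_ptagsL h
      exact (List.prefix_append _ _).trans hj
    · exact List.prefix_refl _
theorem exists_prefix_of_mem_ptagsL : ∀ {ts : List (RTree α)} {p x : List ℕ} {i : ℕ} {b : Bool},
    (x, b) ∈ ptagsL ts p i → ∃ j, i ≤ j ∧ p ++ [j] <+: x
  | [], _, _, _, _, h => by simp [ptagsL] at h
  | c :: cs, p, x, i, b, h => by
    rcases List.mem_append.mp h with h | h
    · exact ⟨i, le_rfl, prefix_of_mem_ptags h⟩
    · obtain ⟨j, hj, hpre⟩ := exists_prefix_of_mem_ptagsL h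
      exact ⟨j, by omega, hpre⟩
end

theorem not_mem_ptagsL_self {ts : List (RTree α)} {p : List ℕ} {i : ℕ} {b : Bool} :
    (p, b) ∉ ptagsL ts p i := fun h => by
  obtain ⟨j, -, hj⟩ := exists_prefix_of_mem_ptagsL h
  simpa using hj.length_le

mutual
theorem nodup_ptags : ∀ (t : RTree α) (q : List ℕ), (ptags t q).Nodup
  | .node _ cs, q => by
    rw [ptags, List.nodup_cons, List.nodup_append, List.mem_append, List.mem_singleton]
    refine ⟨?_, nodup_ptagsL cs q 0, List.nodup_singleton _, ?_⟩
    · rintro (h | h)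
      · exact not_mem_ptagsL_self h
      · simp at h
    · rintro ⟨x, b⟩ hx _ h rfl
      rw [List.mem_singleton] at h
      exact not_mem_ptagsL_self (h ▸ hx)
theorem nodup_ptagsL : ∀ (ts : List (RTree α)) (p : List ℕ) (i : ℕ), (ptagsL ts p i).Nodup
  | [], _, _ => List.nodup_nil
  | c :: cs, p, i => by
    refine List.nodup_append.mpr ⟨nodup_ptags c _, nodup_ptagsL cs p (i + 1), ?_⟩
    rintro ⟨x, b⟩ hx ⟨y, b'⟩ hy ⟨⟩
    obtain ⟨j, hij, hj⟩ := exists_prefix_of_mem_ptagsL hy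
    have := List.eq_of_append_singleton_prefix (prefix_of_mem_ptags hx) hj
    omega
end

theorem nodup_tagList (t : RTree α) : (tagList t).Nodup := nodup_ptags t []

-- Only the closing tag of each node moves: past the tags of its later siblings.
theorem btags_pfcnsL_perm : ∀ (ts : List (RTree α)) (p : List ℕ) (i : ℕ),
    (pfcnsL ts p i).btags.Perm (ptagsL ts p i)
  | [], _, _ => by simp [pfcnsL, ptagsL, BTree.btags]
  | .node _ cs :: ts, p, i => by
    simp only [pfcnsL, BTree.btags, ptagsL, ptags, List.cons_append, List.perm_cons,
      List.append_assoc]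
    exact ((btags_pfcnsL_perm cs _ 0).append
      (List.perm_append_comm.trans ((btags_pfcnsL_perm ts p (i + 1)).append_left _)))

theorem nodup_btagList (t : RTree α) : (btagList t).Nodup := by
  obtain ⟨a, cs⟩ := t
  refine (List.Perm.nodup_iff ?_).mpr (nodup_tagList (.node a cs))
  simp only [btagList, pfcns, BTree.btags, tagList, ptags, List.append_nil, List.perm_cons]
  exact (btags_pfcnsL_perm cs [] 0).append_right _

mutual
theorem map_internalNodes_sublist_ptags : ∀ (t : RTree α) (q : List ℕ),
    (internalNodes t q).map (·, true) <+ ptags t q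
  | .node _ [], _ => by simp [internalNodes]
  | .node _ (c :: cs), q => by
    rw [internalNodes, ptags, List.map_append]
    exact ((map_internalNodesL_sublist_ptagsL (c :: cs) q 0).append (by simp)).cons _
theorem map_internalNodesL_sublist_ptagsL : ∀ (ts : List (RTree α)) (p : List ℕ) (i : ℕ),
    (internalNodesL ts p i).map (·, true) <+ ptagsL ts p i
  | [], _, _ => by simp [internalNodesL, ptagsL]
  | c :: cs, p, i => by
    rw [internalNodesL, ptagsL, List.map_append]
    exact (map_internalNodes_sublist_ptags c _).append
      (map_internalNodesL_sublist_ptagsL cs p (i + 1))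
end

mutual
theorem map_internalNodes_sublist_btags_pfcnsL : ∀ (a : α) (cs : List (RTree α)) (q : List ℕ),
    (internalNodes (.node a cs) q).map (fun q => (q ++ [0], true)) <+ (pfcnsL cs q 0).btags
  | _, [], _ => by simp [internalNodes]
  | _, .node b ds :: cs, q => by
    rw [internalNodes, internalNodesL, pfcnsL, BTree.btags, List.map_append, List.map_append]
    exact (((map_internalNodes_sublist_btags_pfcnsL b ds _).append
      (map_internalNodesL_sublist_btags_pfcnsL cs q 1)).append (by simp)).cons _
theorem map_internalNodesL_sublist_btags_pfcnsL : ∀ (ts : List (RTree α)) (p : List ℕ) (i : ℕ),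
    (internalNodesL ts p i).map (fun q => (q ++ [0], true)) <+ (pfcnsL ts p i).btags
  | [], _, _ => by simp [internalNodesL, pfcnsL, BTree.btags]
  | .node b ds :: cs, p, i => by
    rw [internalNodesL, pfcnsL, BTree.btags, List.map_append]
    exact (((map_internalNodes_sublist_btags_pfcnsL b ds _).append
      (map_internalNodesL_sublist_btags_pfcnsL cs p (i + 1))).trans
      (List.sublist_append_left _ _)).cons _
end

theorem map_internalNodes_sublist_tagList (t : RTree α) :
    (internalNodes t []).map (·, true) <+ tagList t :=
  map_internalNodes_sublist_ptags t []

theorem map_internalNodes_sublist_btagList (t : RTree α) :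
    (internalNodes t []).map (fun q => (q ++ [0], true)) <+ btagList t := by
  obtain ⟨a, cs⟩ := t
  exact (((map_internalNodes_sublist_btags_pfcnsL a cs []).trans
    (List.sublist_append_left _ _)).trans (List.sublist_append_left _ _)).cons _

theorem mem_internalNodesL_of_getElem? {cs : List (RTree α)} {c : RTree α} {p x : List ℕ}
    {i k : ℕ} (hc : cs[k]? = some c) (hx : x ∈ internalNodes c (p ++ [i + k])) :
    x ∈ internalNodesL cs p i := by
  induction cs generalizing i k with
  | nil => simp at hc
  | cons c' cs ih =>
    rw [internalNodesL, List.mem_append]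
    cases k with
    | zero => cases hc; exact .inl hx
    | succ k => exact .inr (ih hc (by rwa [Nat.add_right_comm, Nat.add_assoc]))

theorem append_mem_internalNodes {t : RTree α} {q : List ℕ} (p : List ℕ)
    (h : IsNode t (q ++ [0])) : p ++ q ∈ internalNodes t p := by
  induction q generalizing t p with
  | nil =>
    obtain ⟨_, _ | ⟨c, cs⟩⟩ := t
    · simp [IsNode, subtreeAt] at h
    · simp [internalNodes]
  | cons i q ih =>
    obtain ⟨a, cs⟩ := t
    simp only [IsNode, List.cons_append, subtreeAt] at h
    cases hc : cs[i]? with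
    | none => simp [hc] at h
    | some c =>
      rw [hc] at h
      obtain _ | ⟨c₀, cs₀⟩ := cs
      · simp at hc
      rw [internalNodes, List.mem_append]
      refine .inl (mem_internalNodesL_of_getElem? hc ?_)
      simpa using ih (p ++ [i]) h

end RTree

/-- Let `c₁, …, c_m` be the nodes of `t` that are first children of
their parents (paths of the form `q ++ [0]`, the parent being `q`), listed in the
order in which their closing tags appear in `XML(FCNS(t))`.  Then the closing tags
of the parents appear in the same order in `XML(t)`.  (Pairwise formulation: for any
two first children, the order of their closing tags in `XML(FCNS(t))` agrees with
the order of their parents' closing tags in `XML(t)`.) -/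
theorem parents_closing_same_order {α : Type} (t : RTree α) (q₁ q₂ : List ℕ)
    (h₁ : RTree.IsNode t (q₁ ++ [0])) (h₂ : RTree.IsNode t (q₂ ++ [0]))
    (h : RTree.posClose' t (q₁ ++ [0]) < RTree.posClose' t (q₂ ++ [0])) :
    RTree.posClose t q₁ < RTree.posClose t q₂ := by
  have hm₁ : q₁ ∈ RTree.internalNodes t [] := by simpa using RTree.append_mem_internalNodes [] h₁
  have hm₂ : q₂ ∈ RTree.internalNodes t [] := by simpa using RTree.append_mem_internalNodes [] h₂
  have hbefore : [q₁, q₂] <+ RTree.internalNodes t [] :=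
    List.pair_sublist_of_map_sublist (RTree.nodup_btagList t)
      (RTree.map_internalNodes_sublist_btagList t) hm₁ hm₂ (by simpa [RTree.posClose'] using h)
  simpa [RTree.posClose] using List.idxOf_lt_idxOf_of_pair_sublist (RTree.nodup_tagList t)
    ((hbefore.map _).trans (RTree.map_internalNodes_sublist_tagList t))
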